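/- If ψ : ℝ^d → ℝ is bounded, then for every x ∈ ℝ^d, |D_p^h ψ(x)| ≤ ((p−1)/2) Σ_{β∈ℤ^d} max(|ψ(x+y_β) − ψ(x)|, |ψ(x) − ψ(x−y_β)|)^{p−2} · |ψ(x+y_β) + ψ(x−y_β) − 2ψ(x)| · ω_β. -/

import Mathlib

open scoped BigOperators

/-!
Since `ω` is even, pairing `β` with `-β` gives
`2 D_p^h ψ(x) = Σ_β (J_p(a_β) - J_p(b_β)) ω_β` with `a_β = ψ(x + y_β) - ψ(x)` and
`b_β = ψ(x) - ψ(x - y_β)`, whose difference `a_β - b_β` is the second difference of `ψ`.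
The estimate then follows from the local Lipschitz bound
`|J_p(a) - J_p(b)| ≤ (p - 1) max(|a|, |b|)^{p-2} |a - b|`.
The pairing needs `ω` to have finite support (a `finsum` over an infinite support is `0`),
which holds because `ω_β = 0` once `|y_β| ≥ r`.
-/

/-- `J_p(ξ) = |ξ|^{p-2} ξ`. -/
noncomputable def Jp (p ξ : ℝ) : ℝ := |ξ| ^ (p - 2) * ξ

/-- The grid point `y_β = h β ∈ ℝ^d` for `β ∈ ℤ^d`. -/
noncomputable def ygrid (d : ℕ) (h : ℝ) (β : Fin d → ℤ) : EuclideanSpace ℝ (Fin d) :=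
  (WithLp.equiv 2 (Fin d → ℝ)).symm (fun i => h * (β i : ℝ))

/-- The discrete `p`-Laplacian `D_p^h ψ(x) = Σ_β J_p(ψ(x+y_β) - ψ(x)) ω_β`. -/
noncomputable def Dph (d : ℕ) (p h : ℝ) (ω : (Fin d → ℤ) → ℝ)
    (ψ : EuclideanSpace ℝ (Fin d) → ℝ) (x : EuclideanSpace ℝ (Fin d)) : ℝ :=
  ∑ᶠ β, Jp p (ψ (x + ygrid d h β) - ψ x) * ω β

lemma Jp_neg (p ξ : ℝ) : Jp p (-ξ) = -Jp p ξ := by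
  rw [Jp, Jp, abs_neg, mul_neg]

/-- Bernoulli's inequality `(1 + (u - 1)) ^ (q + 1) ≥ 1 + (q + 1) (u - 1)` at `u = s / t`,
scaled by `t ^ (q + 1)`. -/
lemma mul_rpow_sub_rpow_le {q s t : ℝ} (hq : 0 ≤ q) (hs : 0 ≤ s) (hst : s ≤ t) :
    s * (t ^ q - s ^ q) ≤ q * t ^ q * (t - s) := by
  rcases (hs.trans hst).eq_or_lt with rfl | ht
  · simp [le_antisymm hst hs]
  set u := s / t
  have hu : 0 ≤ u := div_nonneg hs ht.le
  have hsu : s = u * t := (div_mul_cancel₀ s ht.ne').symm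
  have hbernoulli : 1 + (q + 1) * (u - 1) ≤ u ^ q * u := by
    have := one_add_mul_self_le_rpow_one_add (show (-1 : ℝ) ≤ u - 1 by linarith)
      (show (1 : ℝ) ≤ q + 1 by linarith)
    rwa [add_sub_cancel, Real.rpow_add' hu (by linarith), Real.rpow_one] at this
  have htq : 0 ≤ t * t ^ q := mul_nonneg ht.le (Real.rpow_nonneg ht.le q)
  rw [hsu, Real.mul_rpow hu ht.le]
  nlinarith [mul_le_mul_of_nonneg_left hbernoulli htq]

lemma abs_Jp_sub_Jp_le {p : ℝ} (hp : 2 ≤ p) (a b : ℝ) :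
    |Jp p a - Jp p b| ≤ (p - 1) * max |a| |b| ^ (p - 2) * |a - b| := by
  wlog hba : |b| ≤ |a| generalizing a b
  · simpa [max_comm, abs_sub_comm] using this b a (le_of_not_ge hba)
  set q := p - 2 with hq_def
  have hq : 0 ≤ q := by linarith
  have hpow : |b| ^ q ≤ |a| ^ q := Real.rpow_le_rpow (abs_nonneg b) hba hq
  have haq : 0 ≤ |a| ^ q := Real.rpow_nonneg (abs_nonneg a) q
  have hsplit : Jp p a - Jp p b = |a| ^ q * (a - b) + (|a| ^ q - |b| ^ q) * b := by
    simp only [Jp, ← hq_def]; ring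
  rw [max_eq_left hba, hsplit]
  calc |(|a| ^ q * (a - b) + (|a| ^ q - |b| ^ q) * b)|
      ≤ |a| ^ q * |a - b| + |b| * (|a| ^ q - |b| ^ q) := by
        refine (abs_add_le _ _).trans_eq ?_
        rw [abs_mul, abs_mul, abs_of_nonneg haq, abs_of_nonneg (sub_nonneg.2 hpow), mul_comm |b|]
    _ ≤ |a| ^ q * |a - b| + q * |a| ^ q * (|a| - |b|) := by
        linarith [mul_rpow_sub_rpow_le hq (abs_nonneg b) hba]
    _ ≤ |a| ^ q * |a - b| + q * |a| ^ q * |a - b| := by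
        gcongr; exact abs_sub_abs_le_abs_sub a b
    _ = (p - 1) * |a| ^ q * |a - b| := by rw [hq_def]; ring

lemma abs_Jp_sub_Jp_le_second_diff {p : ℝ} (hp : 2 ≤ p) (u v w : ℝ) :
    |Jp p (u - v) - Jp p (v - w)| ≤ (p - 1) * max |u - v| |v - w| ^ (p - 2) * |u + w - 2 * v| := by
  simpa only [show u - v - (v - w) = u + w - 2 * v by ring] using abs_Jp_sub_Jp_le hp (u - v) (v - w)

lemma ygrid_neg (d : ℕ) (h : ℝ) (β : Fin d → ℤ) : ygrid d h (-β) = -ygrid d h β := by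
  ext i
  simp [ygrid]

lemma abs_mul_abs_le_norm_ygrid (d : ℕ) (h : ℝ) (β : Fin d → ℤ) (i : Fin d) :
    |h| * |(β i : ℝ)| ≤ ‖ygrid d h β‖ := by
  simpa [ygrid, abs_mul] using PiLp.norm_apply_le (ygrid d h β) i

lemma finite_setOf_norm_ygrid_lt (d : ℕ) {h : ℝ} (hh : h ≠ 0) (r : ℝ) :
    {β : Fin d → ℤ | ‖ygrid d h β‖ < r}.Finite := by
  set N : Fin d → ℤ := fun _ => ⌈r / |h|⌉
  refine (Set.finite_Icc (-N) N).subset fun β hβ => ?_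
  have hcoord : ∀ i, |(β i : ℝ)| ≤ N i := fun i =>
    ((le_div_iff₀' (abs_pos.2 hh)).2 ((abs_mul_abs_le_norm_ygrid d h β i).trans hβ.le)).trans
      (Int.le_ceil _)
  refine ⟨fun i => ?_, fun i => ?_⟩
  · exact_mod_cast neg_le_of_abs_le (hcoord i)
  · exact_mod_cast le_of_abs_le (hcoord i)

section finsum

variable {α : Type*}

lemma abs_finsum_le_finsum_abs (f : α → ℝ) : |∑ᶠ a, f a| ≤ ∑ᶠ a, |f a| := by
  by_cases hf : f.support.Finite
  · rw [finsum_eq_sum f hf, finsum_eq_sum_of_support_subset (s := hf.toFinset) _ (by simp)]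
    exact Finset.abs_sum_le_sum_abs _ _
  · rw [finsum_of_infinite_support hf, abs_zero]
    exact finsum_nonneg fun a => abs_nonneg (f a)

lemma abs_finsum_mul_le_finsum_mul {f g ω : α → ℝ} (hω : ω.support.Finite)
    (hω_nonneg : ∀ a, 0 ≤ ω a) (hfg : ∀ a, |f a| ≤ g a) :
    |∑ᶠ a, f a * ω a| ≤ ∑ᶠ a, g a * ω a := by
  refine (abs_finsum_le_finsum_abs _).trans (finsum_le_finsum' ?_ ?_ fun a => ?_)
  · exact hω.subset fun a ha => right_ne_zero_of_mul (abs_ne_zero.1 ha)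
  · exact hω.subset (Function.support_mul_subset_right _ _)
  · rw [abs_mul, abs_of_nonneg (hω_nonneg a)]
    exact mul_le_mul_of_nonneg_right (hfg a) (hω_nonneg a)

lemma two_mul_finsum_mul_eq_finsum_add_neg_mul [InvolutiveNeg α] {ω : α → ℝ}
    (hω : ω.support.Finite) (hsym : ∀ β, ω (-β) = ω β) (f : α → ℝ) :
    2 * ∑ᶠ β, f β * ω β = ∑ᶠ β, (f β + f (-β)) * ω β := by
  have hfin : ∀ g : α → ℝ, (fun β => g β * ω β).support.Finite := fun g =>
    hω.subset (Function.support_mul_subset_right _ _)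
  have hneg : ∑ᶠ β, f (-β) * ω β = ∑ᶠ β, f β * ω β := by
    simpa only [Equiv.neg_apply, hsym] using
      finsum_comp_equiv (Equiv.neg α) (f := fun β => f β * ω β)
  simp only [add_mul]
  rw [finsum_add_distrib (hfin f) (hfin fun β => f (-β)), hneg, two_mul]

end finsum

theorem abs_Dph_le_second_differences_general (d : ℕ) (p : ℝ) (hp : 2 ≤ p)
    (h r : ℝ) (hh : 0 < h)
    (ω : (Fin d → ℤ) → ℝ) (hsym : ∀ β, ω (-β) = ω β) (hnn : ∀ β, 0 ≤ ω β)
    (hzero : ∀ β, r ≤ ‖ygrid d h β‖ → ω β = 0)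
    (ψ : EuclideanSpace ℝ (Fin d) → ℝ)
    (x : EuclideanSpace ℝ (Fin d)) :
    |Dph d p h ω ψ x| ≤
      (p - 1) / 2 *
        ∑ᶠ β, (max |ψ (x + ygrid d h β) - ψ x| |ψ x - ψ (x - ygrid d h β)|) ^ (p - 2) *
          |ψ (x + ygrid d h β) + ψ (x - ygrid d h β) - 2 * ψ x| * ω β := by
  set y := ygrid d h
  have hω : ω.support.Finite := (finite_setOf_norm_ygrid_lt d hh.ne' r).subset
    fun β hβ => lt_of_not_ge (mt (hzero β) hβ)
  have hpair : 2 * Dph d p h ω ψ x =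
      ∑ᶠ β, (Jp p (ψ (x + y β) - ψ x) - Jp p (ψ x - ψ (x - y β))) * ω β := by
    rw [Dph, two_mul_finsum_mul_eq_finsum_add_neg_mul hω hsym]
    refine finsum_congr fun β => ?_
    rw [ygrid_neg, ← sub_eq_add_neg, ← neg_sub (ψ x) (ψ (x - y β)), Jp_neg, ← sub_eq_add_neg]
  calc |Dph d p h ω ψ x| = 1 / 2 * |2 * Dph d p h ω ψ x| := by
        rw [abs_mul, abs_two]; ring
    _ ≤ 1 / 2 * ∑ᶠ β, ((p - 1) *
          max |ψ (x + y β) - ψ x| |ψ x - ψ (x - y β)| ^ (p - 2) *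
            |ψ (x + y β) + ψ (x - y β) - 2 * ψ x|) * ω β := by
        rw [hpair]
        gcongr
        exact abs_finsum_mul_le_finsum_mul hω hnn fun β => abs_Jp_sub_Jp_le_second_diff hp _ _ _
    _ = _ := by
        rw [mul_finsum, mul_finsum]
        exact finsum_congr fun β => by ring

/-- Second-order difference bound for the discrete `p`-Laplacian (estimate (3.4)). -/
theorem abs_Dph_le_second_differences (d : ℕ) (hd : 1 ≤ d) (p : ℝ) (hp : 2 ≤ p)
    (h r : ℝ) (hh : 0 < h) (hr : 0 < r)
    (ω : (Fin d → ℤ) → ℝ) (hsym : ∀ β, ω (-β) = ω β) (hnn : ∀ β, 0 ≤ ω β)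
    (hzero : ∀ β, r ≤ ‖ygrid d h β‖ → ω β = 0)
    (ψ : EuclideanSpace ℝ (Fin d) → ℝ) (hψ : BddAbove (Set.range fun z => |ψ z|))
    (x : EuclideanSpace ℝ (Fin d)) :
    |Dph d p h ω ψ x| ≤
      (p - 1) / 2 *
        ∑ᶠ β, (max |ψ (x + ygrid d h β) - ψ x| |ψ x - ψ (x - ygrid d h β)|) ^ (p - 2) *
          |ψ (x + ygrid d h β) + ψ (x - ygrid d h β) - 2 * ψ x| * ω β :=
  abs_Dph_le_second_differences_general d p hp h r hh ω hsym hnn hzero ψ x
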